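/- For a nonzero submodule C ⊆ R^n over an Artinian local ring R, the minimum Hamming distance satisfies d_H(C) ≤ n − λ(C)/λ(R) + 1 and d_H(C) ≤ n − type(C)/type(R) + 1. -/

import Mathlib

open IsLocalRing

/-- Length of a module, as a natural number: the Krull dimension of its submodule lattice
(i.e. the supremum of lengths of chains of submodules). -/
noncomputable def lenN (R M : Type*) [CommRing R] [AddCommGroup M] [Module R M] : ℕ :=
  ((Order.krullDim (Submodule R M)).unbotD 0).toNat

/-- The socle of a module over a local ring: elements killed by the maximal ideal. -/
abbrev socle (R M : Type*) [CommRing R] [IsLocalRing R] [AddCommGroup M] [Module R M] :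
    Submodule R M :=
  Submodule.torsionBySet R M (maximalIdeal R)

/-- type(M) = dim_K soc(M), the dimension of the socle over the residue field K = R/m. -/
noncomputable def typeOf (R M : Type*) [CommRing R] [IsLocalRing R] [AddCommGroup M]
    [Module R M] : ℕ :=
  Module.finrank (R ⧸ maximalIdeal R) (socle R M)

/-- Minimal number of generators of a module. -/
noncomputable def mu (R M : Type*) [CommRing R] [AddCommGroup M] [Module R M] : ℕ :=
  sInf {k : ℕ | ∃ s : Finset M, s.card = k ∧ Submodule.span R (s : Set M) = ⊤}

/-- Free rank: the largest r admitting an R-linear surjection M → R^r. -/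
noncomputable def freeRank (R M : Type*) [CommRing R] [AddCommGroup M] [Module R M] : ℕ :=
  sSup {r : ℕ | ∃ f : M →ₗ[R] (Fin r → R), Function.Surjective f}

/-- An Artinian local ring is Frobenius if its socle is 1-dimensional over the residue field. -/
def IsFrobenius (R : Type*) [CommRing R] [IsLocalRing R] : Prop :=
  typeOf R R = 1

/-- The orthogonal (dual) code with respect to the standard bilinear form on R^n. -/
def dualCode {R : Type*} [CommRing R] {n : ℕ} (C : Submodule R (Fin n → R)) :
    Submodule R (Fin n → R) where
  carrier := {v | ∀ w ∈ C, ∑ i, v i * w i = 0}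
  zero_mem' := by intro w _; simp
  add_mem' := by
    intro a b ha hb w hw
    simpa [add_mul, Finset.sum_add_distrib] using by rw [ha w hw, hb w hw, add_zero]
  smul_mem' := by
    intro c a ha w hw
    simp only [Set.mem_setOf_eq] at ha ⊢
    simp [Pi.smul_apply, smul_eq_mul, mul_assoc, ← Finset.mul_sum, ha w hw]

/-- The submodule H_A of vectors of R^n supported on a set A of coordinates. -/
def suppCode (R : Type*) [CommRing R] {n : ℕ} (A : Finset (Fin n)) :
    Submodule R (Fin n → R) where
  carrier := {v | ∀ i, i ∉ A → v i = 0}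
  zero_mem' := by intro i _; simp
  add_mem' := by intro a b ha hb i hi; simp [ha i hi, hb i hi]
  smul_mem' := by intro c a ha i hi; simp [ha i hi]

open Classical in
/-- Hamming weight of a vector. -/
noncomputable def wt {R : Type*} [CommRing R] {n : ℕ} (v : Fin n → R) : ℕ :=
  (Finset.univ.filter (fun i => v i ≠ 0)).card

/-- Minimum Hamming distance (= minimum weight of a nonzero codeword) of a code. -/
noncomputable def dH {R : Type*} [CommRing R] {n : ℕ} (C : Submodule R (Fin n → R)) : ℕ :=
  sInf {w : ℕ | ∃ v ∈ C, v ≠ 0 ∧ wt v = w}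

/-- The coordinatewise reduction R^n → K^n modulo the maximal ideal. -/
def rho (R : Type*) [CommRing R] [IsLocalRing R] {n : ℕ} (v : Fin n → R) :
    Fin n → R ⧸ maximalIdeal R :=
  fun i => Ideal.Quotient.mk (maximalIdeal R) (v i)

/-!
Let `d = d_H(C)` and delete any `d - 1` coordinates `T`. A codeword vanishing off `T` has weight
below `d`, so it is zero: the punctured code map `C → R^(n-d+1)` is injective. Length and type are
monotone along injections and additive on finite products, whence `λ(C) ≤ (n - d + 1) λ(R)` and
`type(C) ≤ (n - d + 1) type(R)`.
-/

section Weight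

variable {R : Type*} [CommRing R] {n : ℕ}

open Classical in
theorem wt_le_card_of_support {v : Fin n → R} {T : Finset (Fin n)} (h : ∀ i ∉ T, v i = 0) :
    wt v ≤ T.card :=
  Finset.card_le_card fun i hi => by
    by_contra hiT
    exact (Finset.mem_filter.mp hi).2 (h i hiT)

theorem wt_le (v : Fin n → R) : wt v ≤ n := by
  simpa using wt_le_card_of_support (v := v) (T := Finset.univ) (by simp)

open Classical in
theorem wt_pos {v : Fin n → R} (hv : v ≠ 0) : 0 < wt v := by
  obtain ⟨i, hi⟩ := Function.ne_iff.mp hv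
  exact Finset.card_pos.mpr ⟨i, Finset.mem_filter.mpr ⟨Finset.mem_univ _, hi⟩⟩

theorem dH_le_wt {C : Submodule R (Fin n → R)} {v : Fin n → R} (hv : v ∈ C) (hv0 : v ≠ 0) :
    dH C ≤ wt v :=
  Nat.sInf_le ⟨v, hv, hv0, rfl⟩

theorem dH_le (C : Submodule R (Fin n → R)) : dH C ≤ n := by
  rcases Set.eq_empty_or_nonempty {w : ℕ | ∃ v ∈ C, v ≠ 0 ∧ wt v = w} with h | h
  · simp [dH, h]
  · obtain ⟨v, -, -, hv⟩ := Nat.sInf_mem h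
    rw [dH, ← hv]
    exact wt_le v

end Weight

section Puncture

variable (R : Type*) [CommRing R] {n : ℕ}

def puncture (T : Finset (Fin n)) : (Fin n → R) →ₗ[R] (↥Tᶜ → R) :=
  LinearMap.funLeft R R (↑)

variable {R}

theorem puncture_comp_subtype_injective {C : Submodule R (Fin n → R)} {T : Finset (Fin n)}
    (hT : ∀ v ∈ C, v ≠ 0 → T.card < wt v) :
    Function.Injective (puncture R T ∘ₗ C.subtype) := by
  refine (injective_iff_map_eq_zero _).mpr fun c hc => ?_
  by_contra hc0
  have hsupp : ∀ i ∉ T, (c : Fin n → R) i = 0 := fun i hi =>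
    congrFun hc ⟨i, Finset.mem_compl.mpr hi⟩
  exact absurd (hT c c.2 (by simpa using hc0)) (not_lt.mpr (wt_le_card_of_support hsupp))

end Puncture

section Length

variable {R : Type*} [CommRing R] {M N : Type*} [AddCommGroup M] [AddCommGroup N]
  [Module R M] [Module R N]

theorem lenN_eq_toNat_length : lenN R M = (Module.length R M).toNat := by
  rw [lenN, ← Module.coe_length, WithBot.unbotD_coe]

theorem lenN_le_of_injective [IsArtinian R N] [IsNoetherian R N] {f : M →ₗ[R] N}
    (hf : Function.Injective f) : lenN R M ≤ lenN R N := by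
  simpa only [lenN_eq_toNat_length] using
    ENat.toNat_le_toNat (Module.length_le_of_injective f hf) Module.length_ne_top

theorem lenN_pi (ι : Type*) [Fintype ι] : lenN R (ι → M) = Fintype.card ι * lenN R M := by
  simp [lenN_eq_toNat_length, ENat.toNat_mul]

end Length

section Socle

attribute [local instance] Ideal.Quotient.field

variable {R : Type*} [CommRing R] [IsLocalRing R] {M N : Type*} [AddCommGroup M] [AddCommGroup N]
  [Module R M] [Module R N]

theorem map_mem_socle (f : M →ₗ[R] N) {x : M} (hx : x ∈ socle R M) : f x ∈ socle R N := by
  rw [Submodule.mem_torsionBySet_iff] at hx ⊢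
  intro a
  rw [← map_smul, hx a, map_zero]

def socleMap (f : M →ₗ[R] N) : socle R M →ₗ[R ⧸ maximalIdeal R] socle R N :=
  (f.restrict fun _ => map_mem_socle f).extendScalarsOfSurjective Ideal.Quotient.mk_surjective

def soclePiEquiv (ι : Type*) : socle R (ι → M) ≃ₗ[R ⧸ maximalIdeal R] (ι → socle R M) :=
  LinearEquiv.extendScalarsOfSurjective Ideal.Quotient.mk_surjective
    { toFun x i := ⟨x.1 i, map_mem_socle (LinearMap.proj i) x.2⟩
      invFun v := ⟨fun i => (v i).1, by
        simp only [Submodule.mem_torsionBySet_iff]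
        intro a
        funext i
        exact (Submodule.mem_torsionBySet_iff _ _).mp (v i).2 a⟩
      map_add' _ _ := rfl
      map_smul' _ _ := rfl
      left_inv _ := rfl
      right_inv _ := rfl }

theorem finite_socle [IsArtinian R M] : Module.Finite (R ⧸ maximalIdeal R) (socle R M) := by
  have : IsArtinian (R ⧸ maximalIdeal R) (socle R M) := isArtinian_of_tower R inferInstance
  exact (IsSemisimpleModule.finite_tfae.out 2 0).mp this

theorem typeOf_le_of_injective [IsArtinian R N] {f : M →ₗ[R] N} (hf : Function.Injective f) :
    typeOf R M ≤ typeOf R N :=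
  have := finite_socle (R := R) (M := N)
  LinearMap.finrank_le_finrank_of_injective (f := socleMap f) fun _ _ h =>
    Subtype.ext (hf (congrArg Subtype.val h))

theorem typeOf_pi [IsArtinian R M] (ι : Type*) [Fintype ι] :
    typeOf R (ι → M) = Fintype.card ι * typeOf R M := by
  have := finite_socle (R := R) (M := M)
  rw [typeOf, (soclePiEquiv ι).finrank_eq, Module.finrank_pi_fintype, Finset.sum_const,
    Finset.card_univ, smul_eq_mul, typeOf]

end Socle

theorem stmt14_general (R : Type*) [CommRing R] [IsLocalRing R] [IsArtinianRing R]
    {n : ℕ} (C : Submodule R (Fin n → R)) :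
    (dH C : ℚ) ≤ n - (lenN R C : ℚ) / (lenN R R : ℚ) + 1 ∧
      (dH C : ℚ) ≤ n - (typeOf R C : ℚ) / (typeOf R R : ℚ) + 1 := by
  obtain ⟨T, -, hT⟩ := Finset.exists_subset_card_eq (s := (Finset.univ : Finset (Fin n)))
    (n := dH C - 1) (by simpa using (Nat.sub_le _ 1).trans (dH_le C))
  have hinj : Function.Injective (puncture R T ∘ₗ C.subtype) :=
    puncture_comp_subtype_injective fun v hv hv0 => by
      have := dH_le_wt hv hv0
      have := wt_pos hv0
      omega
  have hcard : Fintype.card ↥Tᶜ + dH C ≤ n + 1 := by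
    rw [Fintype.card_coe, Finset.card_compl, Fintype.card_fin, hT]
    have := dH_le C
    omega
  have hcardQ : (Fintype.card ↥Tᶜ : ℚ) + dH C ≤ n + 1 := by exact_mod_cast hcard
  have hlen : (lenN R C : ℚ) / lenN R R ≤ Fintype.card ↥Tᶜ :=
    div_le_of_le_mul₀ (by positivity) (by positivity)
      (by exact_mod_cast (lenN_le_of_injective hinj).trans_eq (lenN_pi _))
  have htype : (typeOf R C : ℚ) / typeOf R R ≤ Fintype.card ↥Tᶜ :=
    div_le_of_le_mul₀ (by positivity) (by positivity)
      (by exact_mod_cast (typeOf_le_of_injective hinj).trans_eq (typeOf_pi _))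
  constructor <;> linarith

/-- Singleton-type bounds d_H(C) ≤ n − λ(C)/λ(R) + 1 and
d_H(C) ≤ n − type(C)/type(R) + 1 over an Artinian local ring. -/
theorem stmt14 (R : Type*) [CommRing R] [IsLocalRing R] [IsArtinianRing R]
    {n : ℕ} (C : Submodule R (Fin n → R)) (hC : C ≠ ⊥) :
    (dH C : ℚ) ≤ n - (lenN R C : ℚ) / (lenN R R : ℚ) + 1 ∧
      (dH C : ℚ) ≤ n - (typeOf R C : ℚ) / (typeOf R R : ℚ) + 1 :=
  stmt14_general R C
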